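/- Let A be commutative. Then Ã is maximal commutative in A ⋊_α^σ G (i.e. Comm(Ã) = Ã) if and only if for every pair (s, r) with s ∈ G \ {e} and r ∈ A \ {0}, there exists a ∈ A such that r(σ_s(a) − a) ≠ 0. -/
import Mathlib


/-- A `G`-crossed system `{A, G, σ, α}`: a unital ring `A`, a group `G`,
`σ : G → Aut(A)` and a `σ`-cocycle `α : G × G → U(A)` satisfying the
crossed-system axioms (i)-(iii). -/
structure CrossedSystem (A : Type*) [Ring A] (G : Type*) [Group G] where
  σ : G → RingAut A
  α : G → G → Aˣ
  compat : ∀ x y : G, ∀ a : A,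
    σ x (σ y a) = (α x y : A) * σ (x * y) a * ((α x y)⁻¹ : Aˣ)
  cocycle : ∀ x y z : G,
    (α x y : A) * (α (x * y) z : A) = σ x (α y z : A) * (α x (y * z) : A)
  unit_right : ∀ x : G, α x 1 = 1
  unit_left : ∀ x : G, α 1 x = 1

variable {A : Type*} [CommRing A] {G : Type*} [Group G]

/-- Multiplication of the crossed product `A ⋊_α^σ G`, realized on the free
left `A`-module `G →₀ A`: `(a x̄)(b ȳ) = a σ_x(b) α(x,y) (x*y)‾`. -/
noncomputable def cmul (C : CrossedSystem A G) (f g : G →₀ A) : G →₀ A :=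
  f.sum fun s a => g.sum fun t b =>
    Finsupp.single (s * t) (a * C.σ s b * (C.α s t : A))

/-- The element `1_A ē` of the crossed product. -/
noncomputable def cone : G →₀ A := Finsupp.single 1 1

/-- The canonical embedding `ι : A → A ⋊_α^σ G`, `a ↦ a ē`; its range is `Ã`. -/
noncomputable def cemb (a : A) : G →₀ A := Finsupp.single 1 a

/-- The commutant `Comm(Ã)` of the embedded base ring in the crossed product. -/
noncomputable def cCommutant (C : CrossedSystem A G) : Set (G →₀ A) :=
  {x | ∀ a : A, cmul C (cemb a) x = cmul C x (cemb a)}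

/-- `I` is a (non-unital) two-sided ideal of the crossed product `A ⋊_α^σ G`. -/
def cIsIdeal (C : CrossedSystem A G) (I : Set (G →₀ A)) : Prop :=
  0 ∈ I ∧ (∀ x ∈ I, ∀ y ∈ I, x + y ∈ I) ∧ (∀ x ∈ I, -x ∈ I) ∧
    (∀ x ∈ I, ∀ y : G →₀ A, cmul C y x ∈ I ∧ cmul C x y ∈ I)

lemma aux_sigma_one (C : CrossedSystem A G) (a : A) : C.σ 1 a = a := by
  have h := C.compat 1 1 a
  rw [C.unit_right 1] at h
  simp at h
  exact h

lemma aux_eval_sum (x : G →₀ A) (f : G → A → A) (hf : ∀ t, f t 0 = 0) (t : G) :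
    (x.sum fun s b => Finsupp.single s (f s b)) t = f t (x t) := by
  rw [Finsupp.sum_apply]
  refine Finsupp.sum_eq_single t (fun b hb hbt => ?_) (fun _ => by simp [hf]) |>.trans ?_
  · simp [Finsupp.single_apply, hbt]
  · simp

lemma aux_cmul_emb_left (C : CrossedSystem A G) (a : A) (x : G →₀ A) :
    cmul C (cemb a) x = x.sum fun t b => Finsupp.single t (a * b) := by
  unfold cmul cemb
  rw [Finsupp.sum_single_index]
  · refine Finsupp.sum_congr fun t ht => ?_
    rw [C.unit_left t]
    simp [aux_sigma_one]
  · simp [Finsupp.sum]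

lemma aux_cmul_emb_right (C : CrossedSystem A G) (a : A) (x : G →₀ A) :
    cmul C x (cemb a) = x.sum fun s b => Finsupp.single s (b * C.σ s a) := by
  unfold cmul cemb
  refine Finsupp.sum_congr fun s hs => ?_
  rw [Finsupp.sum_single_index (by simp)]
  rw [C.unit_right s]
  simp

lemma aux_mem_comm_iff (C : CrossedSystem A G) (x : G →₀ A) :
    x ∈ cCommutant C ↔ ∀ a : A, ∀ s : G, a * x s = x s * C.σ s a := by
  constructor
  · intro h a s
    have := congrFun (congrArg (⇑) (h a)) s
    rwa [aux_cmul_emb_left, aux_cmul_emb_right,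
      aux_eval_sum x _ (fun t => by ring) s,
      aux_eval_sum x _ (fun t => by ring) s] at this
  · intro h a
    rw [aux_cmul_emb_left, aux_cmul_emb_right]
    ext s
    rw [aux_eval_sum x _ (fun t => by ring) s,
      aux_eval_sum x _ (fun t => by ring) s]
    exact h a s

theorem stmt_11 (C : CrossedSystem A G) (hG : ∃ g : G, g ≠ 1) :
    cCommutant C = Set.range (cemb (A := A) (G := G)) ↔
      ∀ s : G, s ≠ 1 → ∀ r : A, r ≠ 0 → ∃ a : A, r * (C.σ s a - a) ≠ 0 := by
  constructor
  · intro h s hs r hr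
    by_contra hcon
    push_neg at hcon
    have hrs : ∀ a : A, r * C.σ s a = r * a := by
      intro a
      have := hcon a
      rw [mul_sub] at this
      exact sub_eq_zero.mp this
    have hx : (Finsupp.single s r : G →₀ A) ∈ cCommutant C := by
      rw [aux_mem_comm_iff]
      intro a t
      rcases eq_or_ne t s with rfl | ht
      · simp only [Finsupp.single_eq_same]
        rw [hrs a, mul_comm]
      · simp [Finsupp.single_apply, (Ne.symm ht)]
    rw [h] at hx
    obtain ⟨b, hb⟩ := hx
    have := congrFun (congrArg (⇑) hb) s
    simp [cemb, Finsupp.single_apply, Ne.symm hs] at this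
    exact hr this.symm
  · intro h
    ext x
    constructor
    · intro hx
      rw [aux_mem_comm_iff] at hx
      have hsupp : ∀ t : G, t ≠ 1 → x t = 0 := by
        intro t ht
        by_contra hxt
        obtain ⟨a, ha⟩ := h t ht (x t) hxt
        apply ha
        rw [mul_sub]
        have := hx a t
        rw [mul_comm a (x t)] at this
        rw [← this]
        ring
      refine ⟨x 1, ?_⟩
      ext t
      rcases eq_or_ne t 1 with rfl | ht
      · simp [cemb]
      · simp [cemb, Finsupp.single_apply, Ne.symm ht, hsupp t ht]
    · rintro ⟨b, rfl⟩
      rw [aux_mem_comm_iff]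
      intro a s
      rcases eq_or_ne s 1 with rfl | hs
      · simp [cemb, aux_sigma_one, mul_comm]
      · simp [cemb, Finsupp.single_apply, Ne.symm hs]
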